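/- Let G = (V,E) be a graph where vertices represent Z-checks and edges represent qubits, and for each vertex v define Z_v as the product of Pauli-Z on edges incident to v (formally, the indicator vector in F_2^E of edges incident to v). Let T be a BFS tree of G − (v_s,v_t) rooted at v_s with levels L_0,L_1,…, and suppose all edges of G − (v_s,v_t) join vertices within the same level or adjacent levels. Define vectors over F_2^E: h_1 = e_{(v_s,v_t)} (the indicator of the edge (v_s,v_t)) and recursively h_{j+1} = h_j + Σ_{v ∈ L_{j−1}} ∂v, where ∂v ∈ F_2^E is the incidence vector of v. Then h_{j+1} equals the indicator vector of E_{j−1,j}, the set of edges between levels L_{j−1} and L_j, for all j ≥ 1 with L_j nonempty and not containing v_t. -/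

import Mathlib

/-!
Summing the recursion, `h (j+1) = h 1 + Σ_{ℓ v < j} ∂v`: up to the edge `(v_s,v_t)`, `h (j+1)`
is the coboundary of the ball of radius `j - 1` about `v_s`, i.e. the indicator of the edges with
exactly one endpoint in that ball. Since levels of adjacent vertices differ by at most one, these
are the edges between `L_{j-1}` and `L_j`. The edge `(v_s,v_t)` itself cancels, since `h 1`
contains it and exactly one of its endpoints lies in the ball as long as `j ≤ ℓ v_t`.
-/

open Finset

theorem eq_add_sum_filter_lt_of_eq_add_sum_filter_eq {V M : Type*} [Fintype V]
    [AddCommMonoid M] (ℓ : V → ℕ) (g : V → M) (f : ℕ → M)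
    (hrec : ∀ j, 1 ≤ j → f (j + 1) = f j + ∑ v ∈ univ.filter (fun v => ℓ v = j - 1), g v)
    (j : ℕ) : f (j + 1) = f 1 + ∑ v ∈ univ.filter (fun v => ℓ v < j), g v := by
  induction j with
  | zero => simp
  | succ j ih =>
    rw [hrec (j + 1) (by omega), ih, Nat.add_sub_cancel, add_assoc, sum_filter, sum_filter,
      sum_filter, ← sum_add_distrib]
    refine congrArg _ (sum_congr rfl fun v _ => ?_)
    rcases lt_trichotomy (ℓ v) j with hlt | heq | hgt
    · simp [hlt, hlt.ne, Nat.lt_succ_of_lt hlt]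
    · simp [heq]
    · simp [hgt.ne', hgt.not_gt, Nat.not_lt.2 hgt]

theorem sum_incidence_apply {V E R : Type*} [DecidableEq V] [AddCommMonoidWithOne R]
    (ends : E → Sym2 V) (S : Finset V) {e : E} {a b : V} (he : ends e = s(a, b)) (hab : a ≠ b) :
    (∑ v ∈ S, fun e => if v ∈ ends e then (1 : R) else 0) e =
      (if a ∈ S then 1 else 0) + (if b ∈ S then 1 else 0) := by
  have hsplit : ∀ v, (if v ∈ ends e then (1 : R) else 0) =
      (if v = a then 1 else 0) + (if v = b then 1 else 0) := by
    intro v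
    by_cases hva : v = a <;> by_cases hvb : v = b <;> simp_all
  rw [Finset.sum_apply]
  simp only [hsplit, sum_add_distrib, sum_ite_eq']

theorem ZMod.ite_add_ite_eq_ite_xor (p q : Prop) [Decidable p] [Decidable q] :
    ((if p then 1 else 0) + (if q then 1 else 0) : ZMod 2) = if Xor p q then 1 else 0 := by
  by_cases hp : p <;> by_cases hq : q <;> simp [hp, hq, Xor, CharTwo.add_self_eq_zero]

theorem Sym2.exists_mk_eq_mk_and_and_iff {V : Type*} {a b : V} (p q : V → Prop) :
    (∃ x y, s(a, b) = s(x, y) ∧ p x ∧ q y) ↔ p a ∧ q b ∨ p b ∧ q a := by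
  constructor
  · rintro ⟨x, y, hxy, hx, hy⟩
    rcases Sym2.eq_iff.1 hxy with ⟨rfl, rfl⟩ | ⟨rfl, rfl⟩
    exacts [Or.inl ⟨hx, hy⟩, Or.inr ⟨hx, hy⟩]
  · rintro (⟨ha, hb⟩ | ⟨hb, ha⟩)
    exacts [⟨a, b, rfl, ha, hb⟩, ⟨b, a, Sym2.eq_swap, hb, ha⟩]

theorem stmt12_general {V E : Type*} [Fintype V] [DecidableEq V] [DecidableEq E]
    (ends : E → Sym2 V) (hloop : ∀ e, ¬ (ends e).IsDiag)
    (vs vt : V) (e0 : E) (hends : ends e0 = s(vs, vt))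
    (ℓ : V → ℕ) (hroot : ℓ vs = 0)
    (hBFS : ∀ e : E, e ≠ e0 → ∀ a b : V, ends e = s(a, b) →
      ℓ a ≤ ℓ b + 1 ∧ ℓ b ≤ ℓ a + 1)
    (h : ℕ → E → ZMod 2)
    (h1 : h 1 = fun e => if e = e0 then 1 else 0)
    (hrec : ∀ j : ℕ, 1 ≤ j → h (j + 1) =
      h j + ∑ v ∈ Finset.univ.filter (fun v : V => ℓ v = j - 1),
        (fun e => if v ∈ ends e then 1 else 0)) :
    ∀ j : ℕ, 1 ≤ j → j ≤ ℓ vt →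
      h (j + 1) = fun e =>
        if (e ≠ e0 ∧ ∃ a b : V, ends e = s(a, b) ∧ ℓ a = j - 1 ∧ ℓ b = j)
        then 1 else 0 := by
  intro j hj hjt
  rw [eq_add_sum_filter_lt_of_eq_add_sum_filter_eq ℓ _ h hrec j, h1]
  funext e
  obtain ⟨a, b, hab⟩ : ∃ a b, ends e = s(a, b) := Sym2.exists.1 ⟨_, rfl⟩
  have hne : a ≠ b := fun hEq => hloop e (by rw [hab, hEq]; exact Sym2.mk_isDiag_iff.2 rfl)
  simp only [Pi.add_apply, sum_incidence_apply ends _ hab hne, mem_filter, mem_univ, true_and,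
    ZMod.ite_add_ite_eq_ite_xor]
  refine if_congr ?_ rfl rfl
  by_cases he0 : e = e0
  · subst he0
    rw [hends, Sym2.eq_iff] at hab
    rcases hab with ⟨rfl, rfl⟩ | ⟨rfl, rfl⟩ <;>
      simp only [xor_true, not_xor, ne_eq, not_true_eq_false, false_and, iff_false] <;> omega
  · have hlev := hBFS e he0 a b hab
    simp only [he0, xor_false, id_eq, ne_eq, not_false_eq_true, true_and, hab,
      Sym2.exists_mk_eq_mk_and_and_iff]
    unfold Xor
    omega

/-- For the graph of Z-checks (vertices) and qubits (edges), with BFS level function ℓ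
from the root v_s in the graph with the edge e0 = (v_s,v_t) removed, the recursively
defined vectors h_{j+1} = h_j + Σ_{v ∈ L_{j−1}} ∂v (with h_1 the indicator of e0)
equal the indicator of the edge set E_{j−1,j} between consecutive levels. -/
theorem stmt12 {V E : Type*} [Fintype V] [Fintype E] [DecidableEq V] [DecidableEq E]
    (ends : E → Sym2 V) (hloop : ∀ e, ¬ (ends e).IsDiag)
    (vs vt : V) (e0 : E) (hends : ends e0 = s(vs, vt))
    (ℓ : V → ℕ) (hroot : ℓ vs = 0)
    (hBFS : ∀ e : E, e ≠ e0 → ∀ a b : V, ends e = s(a, b) →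
      ℓ a ≤ ℓ b + 1 ∧ ℓ b ≤ ℓ a + 1)
    (h : ℕ → E → ZMod 2)
    (h1 : h 1 = fun e => if e = e0 then 1 else 0)
    (hrec : ∀ j : ℕ, 1 ≤ j → h (j + 1) =
      h j + ∑ v ∈ Finset.univ.filter (fun v : V => ℓ v = j - 1),
        (fun e => if v ∈ ends e then 1 else 0)) :
    ∀ j : ℕ, 1 ≤ j → j ≤ ℓ vt →
      h (j + 1) = fun e =>
        if (e ≠ e0 ∧ ∃ a b : V, ends e = s(a, b) ∧ ℓ a = j - 1 ∧ ℓ b = j)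
        then 1 else 0 :=
  stmt12_general ends hloop vs vt e0 hends ℓ hroot hBFS h h1 hrec
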